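/- Let I be the unique set of primes such that the set of all primes is the disjoint union of I and P_I = {p_n : n ∈ I}. Then the complement of I within the primes equals the alternating sum of the higher-order prime sets starting at order 2, namely {primes} \ I = ⋃_{j≥1} (P^(2j) \ P^(2j+1)). -/
import Mathlib


/-- `nthPrime n` is the `n`-th prime number, 1-indexed: `nthPrime 1 = 2`, `nthPrime 2 = 3`, ... -/
noncomputable def nthPrime (n : ℕ) : ℕ := Nat.nth Nat.Prime (n - 1)

/-- For a set `S` of positive integers, `indexedSet S = {p_n : n ∈ S}`. -/
def indexedSet (S : Set ℕ) : Set ℕ := {m | ∃ n ∈ S, m = nthPrime n}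

/-- The higher-order prime sets: `P 1` is the set of all primes, and `P (k+1) = indexedSet (P k)`
for `k ≥ 1`.  (`P 0` is a junk value.) -/
def P : ℕ → Set ℕ
  | 0 => ∅
  | 1 => {p | p.Prime}
  | (k + 2) => indexedSet (P (k + 1))

lemma nth_prime_zero' : Nat.nth Nat.Prime 0 = 2 := by
  have := Nat.nth_count (p := Nat.Prime) (n := 2) Nat.prime_two
  simp [Nat.count_eq_card_filter_range]

lemma nth_prime_ge (m : ℕ) : m + 2 ≤ Nat.nth Nat.Prime m := by
  induction m with
  | zero => simp [nth_prime_zero']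
  | succ k ih =>
    have h : Nat.nth Nat.Prime k < Nat.nth Nat.Prime (k + 1) :=
      (Nat.nth_lt_nth Nat.infinite_setOf_prime).mpr (Nat.lt_succ_self k)
    omega

lemma nthPrime_gt {n : ℕ} (hn : 1 ≤ n) : n < nthPrime n := by
  have := nth_prime_ge (n - 1)
  unfold nthPrime
  omega

lemma nthPrime_prime (n : ℕ) : Nat.Prime (nthPrime n) := Nat.prime_nth_prime _

lemma nthPrime_inj {n m : ℕ} (hn : 1 ≤ n) (hm : 1 ≤ m) (h : nthPrime n = nthPrime m) :
    n = m := by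
  have := Nat.nth_injective Nat.infinite_setOf_prime h
  omega

lemma indexedSet_mono {S T : Set ℕ} (h : S ⊆ T) : indexedSet S ⊆ indexedSet T := by
  rintro x ⟨n, hn, rfl⟩; exact ⟨n, h hn, rfl⟩

/-- Every element of `P (k+1)` is prime and at least `k + 2`. -/
lemma mem_P_ge : ∀ k, ∀ q ∈ P (k + 1), Nat.Prime q ∧ k + 2 ≤ q := by
  intro k
  induction k with
  | zero => intro q hq; exact ⟨hq, hq.two_le⟩
  | succ j ih =>
    rintro q ⟨n, hn, rfl⟩
    obtain ⟨hnp, hnge⟩ := ih n hn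
    have h1 : 1 ≤ n := by omega
    exact ⟨nthPrime_prime n, by have := nthPrime_gt h1; omega⟩

section Main

variable {I : Set ℕ} (hIprime : ∀ q ∈ I, Nat.Prime q)
    (hunion : {p : ℕ | p.Prime} = I ∪ indexedSet I)
    (hdisj : I ∩ indexedSet I = ∅)

include hIprime hunion hdisj in
/-- Main induction: levels alternate between `I` and its complement. -/
lemma level_parity : ∀ k, (∀ q ∈ P (2 * k + 1) \ P (2 * k + 2), q ∈ I) ∧
    (∀ q ∈ P (2 * k + 2) \ P (2 * k + 3), q ∉ I) := by
  have notIdx : ∀ q, q ∉ indexedSet I → Nat.Prime q → q ∈ I := by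
    intro q hq hp
    have h2 : q ∈ I ∪ indexedSet I := hunion ▸ hp
    exact h2.resolve_right hq
  have inIdx : ∀ q, q ∈ indexedSet I → q ∉ I := by
    intro q hq hqI
    have : q ∈ I ∩ indexedSet I := ⟨hqI, hq⟩
    rw [hdisj] at this
    exact this
  have step : ∀ k q, q ∈ P (k + 2) \ P (k + 3) →
      ∃ n, n ∈ P (k + 1) \ P (k + 2) ∧ (n ∈ I → q ∉ I) ∧ (n ∉ I → q ∈ I) := by
    rintro k q ⟨hq1, hq2⟩
    obtain ⟨n, hn, rfl⟩ := hq1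
    have hn2 : n ∉ P (k + 2) := fun h => hq2 ⟨n, h, rfl⟩
    have hnprime := (mem_P_ge k n hn).1
    refine ⟨n, ⟨hn, hn2⟩, fun hnI => inIdx _ ⟨n, hnI, rfl⟩, fun hnI => ?_⟩
    refine notIdx _ ?_ (nthPrime_prime n)
    rintro ⟨m, hmI, hm⟩
    have hm1 : 1 ≤ m := by have := (hIprime m hmI).two_le; omega
    have hn1 : 1 ≤ n := by have := hnprime.two_le; omega
    have heq : n = m := nthPrime_inj (n := n) (m := m) hn1 hm1 hm
    exact hnI (by rw [heq]; exact hmI)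
  have base1 : ∀ q ∈ P 1 \ P 2, q ∈ I := by
    rintro q ⟨hq1, hq2⟩
    refine notIdx q (fun hq => ?_) hq1
    exact hq2 (indexedSet_mono (fun x hx => hIprime x hx) hq)
  intro k
  induction k with
  | zero =>
    refine ⟨base1, fun q hq => ?_⟩
    obtain ⟨n, hn, h1, _⟩ := step 0 q hq
    exact h1 (base1 n hn)
  | succ j ih =>
    have part1 : ∀ q ∈ P (2 * (j + 1) + 1) \ P (2 * (j + 1) + 2), q ∈ I := by
      intro q hq
      have e1 : 2 * (j + 1) + 1 = (2 * j + 1) + 2 := by ring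
      have e2 : 2 * (j + 1) + 2 = (2 * j + 1) + 3 := by ring
      rw [e1, e2] at hq
      obtain ⟨n, hn, _, h2⟩ := step (2 * j + 1) q hq
      exact h2 (ih.2 n hn)
    refine ⟨part1, fun q hq => ?_⟩
    have e1 : 2 * (j + 1) + 2 = (2 * j + 2) + 2 := by ring
    have e2 : 2 * (j + 1) + 3 = (2 * j + 2) + 3 := by ring
    rw [e1, e2] at hq
    obtain ⟨n, hn, h1, _⟩ := step (2 * j + 2) q hq
    have : n ∈ P (2 * (j + 1) + 1) \ P (2 * (j + 1) + 2) := by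
      have e3 : 2 * (j + 1) + 1 = (2 * j + 2) + 1 := by ring
      have e4 : 2 * (j + 1) + 2 = (2 * j + 2) + 2 := by ring
      rw [e3, e4]
      exact hn
    exact h1 (part1 n this)

end Main

lemma level_exhaust {q : ℕ} (hq : Nat.Prime q) : ∃ k, q ∈ P (k + 1) \ P (k + 2) := by
  have hex : ∃ m, q ∉ P (m + 2) := by
    refine ⟨q - 1, fun h => ?_⟩
    have h1 := (mem_P_ge (q - 1 + 1) q h).2
    have := hq.two_le
    omega
  classical
  refine ⟨Nat.find hex, ?_, Nat.find_spec hex⟩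
  rcases Nat.eq_zero_or_pos (Nat.find hex) with h0 | hpos
  · rw [h0]; exact hq
  · obtain ⟨t, ht⟩ := Nat.exists_eq_add_of_lt hpos
    rw [ht]
    have := Nat.find_min hex (m := t) (by omega)
    simp only [not_not] at this
    have e : 0 + t + 1 + 1 = t + 2 := by ring
    rw [e]
    exact this

/-- The complement within the primes of the unique index set `I` equals the alternating
sum of the higher-order prime sets starting at order 2:
`{primes} \ I = ⋃_{j≥1} (P^(2j) \ P^(2j+1))`. -/
theorem complement_index_set_eq_alternating_sum (I : Set ℕ)
    (hIprime : ∀ q ∈ I, Nat.Prime q)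
    (hunion : {p : ℕ | p.Prime} = I ∪ indexedSet I)
    (hdisj : I ∩ indexedSet I = ∅) :
    {p : ℕ | p.Prime} \ I = ⋃ j : ℕ, (P (2 * (j + 1)) \ P (2 * (j + 1) + 1)) := by
  have hpar := level_parity hIprime hunion hdisj
  ext q
  simp only [Set.mem_diff, Set.mem_setOf_eq, Set.mem_iUnion]
  constructor
  · rintro ⟨hq, hqI⟩
    obtain ⟨k, hk⟩ := level_exhaust hq
    rcases Nat.even_or_odd k with ⟨j, hj⟩ | ⟨j, hj⟩
    · -- k = 2j : then q ∈ I, contradiction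
      exfalso
      apply hqI
      apply (hpar j).1 q
      have e1 : 2 * j + 1 = k + 1 := by omega
      have e2 : 2 * j + 2 = k + 2 := by omega
      rw [e1, e2]
      exact hk
    · -- k = 2j + 1
      refine ⟨j, ?_, ?_⟩
      · have e : 2 * (j + 1) = k + 1 := by omega
        rw [e]; exact hk.1
      · have e : 2 * (j + 1) + 1 = k + 2 := by omega
        rw [e]; exact hk.2
  · rintro ⟨j, hq1, hq2⟩
    have hqprime : Nat.Prime q := by
      have e : 2 * (j + 1) = (2 * j + 1) + 1 := by ring
      rw [e] at hq1
      exact (mem_P_ge (2 * j + 1) q hq1).1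
    refine ⟨hqprime, ?_⟩
    apply (hpar j).2 q
    constructor
    · have e : 2 * j + 2 = 2 * (j + 1) := by ring
      rw [e]; exact hq1
    · have e : 2 * j + 3 = 2 * (j + 1) + 1 := by ring
      rw [e]; exact hq2
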